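/- Inner total and outer total multirelations are each closed under Peleg composition: if R : X ↔ 𝒫Y and S : Y ↔ 𝒫Z never relate to the empty set (inner total), then neither does R ∗ S; if every element of X is related by R to some set and every element of Y is related by S to some set (outer total), then every element of X is related by R ∗ S to some set. -/

import Mathlib

universe u v w x

variable {X : Type u} {Y : Type v} {Z : Type w} {W : Type x}

/-- Relational composition. -/
def rcomp (R : Set (X × Y)) (S : Set (Y × Z)) : Set (X × Z) :=
  {p | ∃ b, (p.1, b) ∈ R ∧ (b, p.2) ∈ S}

/-- Power transpose Λ. -/
def Lam (R : Set (X × Y)) : Set (X × Set Y) :=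
  {p | p.2 = {b | (p.1, b) ∈ R}}

/-- α : postcomposition with the has-element relation. -/
def alphaM (S : Set (X × Set Y)) : Set (X × Y) :=
  {p | ∃ B, (p.1, B) ∈ S ∧ p.2 ∈ B}

/-- η : singleton embedding. -/
def etaM (R : Set (X × Y)) : Set (X × Set Y) :=
  {p | ∃ b, (p.1, b) ∈ R ∧ p.2 = {b}}

/-- Peleg composition. -/
def peleg (R : Set (X × Set Y)) (S : Set (Y × Set Z)) : Set (X × Set Z) :=
  {p | ∃ B, (p.1, B) ∈ R ∧ ∃ f : Y → Set Z, (∀ b ∈ B, (b, f b) ∈ S) ∧ p.2 = ⋃ b ∈ B, f b}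

/-- Outer deterministic: each element relates to exactly one set. -/
def OuterDet (R : Set (X × Set Y)) : Prop := ∀ a, ∃! B, (a, B) ∈ R

/-- Inner deterministic: every related set is a singleton. -/
def InnerDet (R : Set (X × Set Y)) : Prop := ∀ a B, (a, B) ∈ R → ∃ b, B = {b}

/-- Inner univalent: every related set is empty or a singleton. -/
def InnerUniv (R : Set (X × Set Y)) : Prop := ∀ a B, (a, B) ∈ R → B = ∅ ∨ ∃ b, B = {b}

/-- The unit 1_X. -/
def oneM (X : Type u) : Set (X × Set X) := {p | p.2 = {p.1}}

/-- Identity relation. -/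
def idR (X : Type u) : Set (X × X) := {p | p.1 = p.2}

/-- Hoare preorder ⊑↓. -/
def hle (R S : Set (X × Set Y)) : Prop := ∀ a A, (a, A) ∈ R → ∃ B, (a, B) ∈ S ∧ A ⊆ B

/-- Smyth preorder ⊑↑. -/
def sle (P Q : Set (X × Set Y)) : Prop := ∀ a B, (a, B) ∈ Q → ∃ A, (a, A) ∈ P ∧ A ⊆ B

/-- Down-closure. -/
def downCl (R : Set (X × Set Y)) : Set (X × Set Y) := {p | ∃ B, (p.1, B) ∈ R ∧ p.2 ⊆ B}

/-- Atoms: pairs whose second component is a singleton. -/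
def atomsM (X : Type u) (Y : Type v) : Set (X × Set Y) := {p | ∃ b, p.2 = {b}}

/-- Terminal part τ(R). -/
def tauM (R : Set (X × Set Y)) : Set (X × Set Y) := {p ∈ R | p.2 = ∅}

/-- Terminal part of R viewed as a multirelation into any other powerset. -/
def tauAs (R : Set (X × Set Y)) : Set (X × Set Z) := {p | (p.1, (∅ : Set Y)) ∈ R ∧ p.2 = ∅}

/-- Outer determinisation (fusion). -/
def deltaO (R : Set (X × Set Y)) : Set (X × Set Y) := Lam (alphaM R)

/-- Inner determinisation (fission). -/
def deltaI (R : Set (X × Set Y)) : Set (X × Set Y) := etaM (alphaM R)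

def InnerTotal (R : Set (X × Set Y)) : Prop := ∀ p ∈ R, p.2 ≠ ∅

def OuterTotal (R : Set (X × Set Y)) : Prop := ∀ a, ∃ B, (a, B) ∈ R

theorem InnerTotal.peleg {R : Set (X × Set Y)} {S : Set (Y × Set Z)}
    (hR : InnerTotal R) (hS : InnerTotal S) : InnerTotal (peleg R S) := by
  rintro ⟨a, C⟩ ⟨B, hB, f, hf, rfl⟩
  obtain ⟨b, hb⟩ := Set.nonempty_iff_ne_empty.2 (hR _ hB)
  obtain ⟨c, hc⟩ := Set.nonempty_iff_ne_empty.2 (hS _ (hf b hb))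
  exact Set.nonempty_iff_ne_empty.1 ⟨c, Set.mem_biUnion hb hc⟩

theorem OuterTotal.peleg {R : Set (X × Set Y)} {S : Set (Y × Set Z)}
    (hR : OuterTotal R) (hS : OuterTotal S) : OuterTotal (peleg R S) := by
  intro a
  obtain ⟨B, hB⟩ := hR a
  choose f hf using hS
  exact ⟨_, B, hB, f, fun b _ => hf b, rfl⟩

theorem stmt19 (R : Set (X × Set Y)) (S : Set (Y × Set Z)) :
    ((∀ p ∈ R, p.2 ≠ ∅) → (∀ p ∈ S, p.2 ≠ ∅) → ∀ p ∈ peleg R S, p.2 ≠ ∅) ∧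
    ((∀ a : X, ∃ B, (a, B) ∈ R) → (∀ b : Y, ∃ C, (b, C) ∈ S) →
      ∀ a : X, ∃ C, (a, C) ∈ peleg R S) :=
  ⟨InnerTotal.peleg, OuterTotal.peleg⟩
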